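/- arXiv:1807.05241 — 9 statements merged into one kernel-verified Lean document; each statement's English description precedes it below -/
import Mathlib

section
/- For every nonzero vector v ∈ ℝ₊^k, it holds that ‖v‖₁ − ‖v‖_∞ ≤ I_Gini(v) ≤ 2(‖v‖₁ − ‖v‖_∞), where I_Gini(v) = ‖v‖₁ Σ_{i=1}^k (vᵢ/‖v‖₁)(1 − vᵢ/‖v‖₁). -/
/-!
With `S = ∑ vᵢ`, `Q = ∑ vᵢ²` and `M = max vᵢ`, the Gini impurity equals `S - Q / S`, so both
bounds are bounds on `Q`: `Q ≤ M S` because `vᵢ² ≤ M vᵢ` termwise, and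
`Q ≥ M² ≥ S (2M - S)` because `(S - M)² ≥ 0`.
-/

open Finset

namespace Finset

variable {ι : Type*} (s : Finset ι) (hs : s.Nonempty)

theorem sup'_nonneg {α : Type*} [SemilatticeSup α] [Zero α] {v : ι → α}
    (hv : ∀ i ∈ s, 0 ≤ v i) : 0 ≤ s.sup' hs v :=
  let ⟨i, hi⟩ := hs
  le_sup'_of_le v hi (hv i hi)

variable {K : Type*} [Field K] [LinearOrder K] [IsStrictOrderedRing K] {v : ι → K}

theorem sup'_le_sum (hv : ∀ i ∈ s, 0 ≤ v i) : s.sup' hs v ≤ ∑ i ∈ s, v i := by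
  obtain ⟨i, hi, hmax⟩ := exists_mem_eq_sup' hs v
  rw [hmax]
  exact single_le_sum hv hi

theorem sq_sup'_le_sum_sq : s.sup' hs v ^ 2 ≤ ∑ i ∈ s, v i ^ 2 := by
  obtain ⟨i, hi, hmax⟩ := exists_mem_eq_sup' hs v
  rw [hmax]
  exact single_le_sum (fun j _ => sq_nonneg (v j)) hi

theorem sum_sq_le_sup'_mul_sum (hv : ∀ i ∈ s, 0 ≤ v i) :
    ∑ i ∈ s, v i ^ 2 ≤ s.sup' hs v * ∑ i ∈ s, v i := by
  rw [mul_sum]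
  refine sum_le_sum fun i hi => ?_
  rw [sq]
  exact mul_le_mul_of_nonneg_right (le_sup' v hi) (hv i hi)

end Finset

section GiniImpurity

variable {ι K : Type*} [Field K]

def giniImpurity (s : Finset ι) (v : ι → K) : K :=
  (∑ i ∈ s, v i) * ∑ i ∈ s, (v i / ∑ j ∈ s, v j) * (1 - v i / ∑ j ∈ s, v j)

theorem giniImpurity_eq (s : Finset ι) (v : ι → K) :
    giniImpurity s v = ∑ i ∈ s, v i - (∑ i ∈ s, v i ^ 2) / ∑ i ∈ s, v i := by
  rcases eq_or_ne (∑ i ∈ s, v i) 0 with hS | hS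
  · simp [giniImpurity, hS]
  · have hsum : ∑ i ∈ s, (v i / ∑ j ∈ s, v j) * (1 - v i / ∑ j ∈ s, v j) =
        (∑ i ∈ s, v i) / ∑ j ∈ s, v j - (∑ i ∈ s, v i ^ 2) / (∑ j ∈ s, v j) ^ 2 := by
      rw [sum_div, sum_div, ← sum_sub_distrib]
      exact sum_congr rfl fun i _ => by ring
    rw [giniImpurity, hsum]
    field_simp

variable [LinearOrder K] [IsStrictOrderedRing K] (s : Finset ι) (hs : s.Nonempty) {v : ι → K}

theorem sum_sub_sup'_le_giniImpurity (hv : ∀ i ∈ s, 0 ≤ v i) :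
    ∑ i ∈ s, v i - s.sup' hs v ≤ giniImpurity s v := by
  rw [giniImpurity_eq, sub_le_sub_iff_left]
  exact div_le_of_le_mul₀ (sum_nonneg hv) (sup'_nonneg s hs hv) (sum_sq_le_sup'_mul_sum s hs hv)

theorem giniImpurity_le_two_mul_sum_sub_sup' (hv : ∀ i ∈ s, 0 ≤ v i) :
    giniImpurity s v ≤ 2 * (∑ i ∈ s, v i - s.sup' hs v) := by
  have hMS := sup'_le_sum s hs hv
  rw [giniImpurity_eq]
  rcases (sum_nonneg hv).eq_or_lt with hS | hS
  · rw [← hS, div_zero]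
    linarith
  · have : (∑ i ∈ s, v i) * (2 * s.sup' hs v - ∑ i ∈ s, v i) ≤ ∑ i ∈ s, v i ^ 2 := by
      nlinarith [sq_nonneg (∑ i ∈ s, v i - s.sup' hs v), sq_sup'_le_sum_sq s hs (v := v)]
    linarith [(le_div_iff₀' hS).mpr this]

end GiniImpurity

theorem stmt7_general {k : ℕ} [NeZero k] (v : Fin k → ℝ) (hv : ∀ i, 0 ≤ v i) :
    (∑ i, v i) - Finset.univ.sup' Finset.univ_nonempty v ≤
      (∑ i, v i) * ∑ i, (v i / ∑ j, v j) * (1 - v i / ∑ j, v j) ∧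
    (∑ i, v i) * ∑ i, (v i / ∑ j, v j) * (1 - v i / ∑ j, v j) ≤
      2 * ((∑ i, v i) - Finset.univ.sup' Finset.univ_nonempty v) :=
  ⟨sum_sub_sup'_le_giniImpurity _ _ fun i _ => hv i,
    giniImpurity_le_two_mul_sum_sub_sup' _ _ fun i _ => hv i⟩

/-- Gini impurity bounds: for every nonzero `v ∈ ℝ₊^k`,
`‖v‖₁ − ‖v‖_∞ ≤ I_Gini(v) ≤ 2(‖v‖₁ − ‖v‖_∞)`. -/
theorem stmt7 {k : ℕ} [NeZero k] (v : Fin k → ℝ) (hv : ∀ i, 0 ≤ v i) (hv0 : v ≠ 0) :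
    (∑ i, v i) - Finset.univ.sup' Finset.univ_nonempty v ≤
      (∑ i, v i) * ∑ i, (v i / ∑ j, v j) * (1 - v i / ∑ j, v j) ∧
    (∑ i, v i) * ∑ i, (v i / ∑ j, v j) * (1 - v i / ∑ j, v j) ≤
      2 * ((∑ i, v i) - Finset.univ.sup' Finset.univ_nonempty v) :=
  stmt7_general v hv
end

section
/- For every nonzero v ∈ ℝ₊^k with ‖v‖₁ > ‖v‖_∞, the entropy impurity I_Ent(v) = Σᵢ vᵢ log(‖v‖₁/vᵢ) satisfies (‖v‖₁ − ‖v‖_∞)·log(‖v‖₁ / min{‖v‖₁ − ‖v‖_∞, ‖v‖_∞}) ≤ I_Ent(v) ≤ 2(‖v‖₁ − ‖v‖_∞)·log(k·‖v‖₁ / (‖v‖₁ − ‖v‖_∞)). -/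
/-!
Split off a largest entry `v i₀ = ‖v‖_∞`; the other entries carry mass `R = ‖v‖₁ - ‖v‖_∞`.
Each of them is at most `min R ‖v‖_∞`, so its term `vᵢ log(‖v‖₁/vᵢ)` is at least
`vᵢ log(‖v‖₁ / min R ‖v‖_∞)`, and these add up to the lower bound. For the upper bound,
`log x ≤ x - 1` bounds the term of `i₀` by `R`, which is at most `R log(k‖v‖₁/R)` because
`k‖v‖₁/R ≥ 4 > e`; Jensen's inequality for the concave map `x ↦ x log(‖v‖₁/x)` bounds the
remaining terms by `R log(k‖v‖₁/R)` as well.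
-/

/-- Entropy impurity (log base 2), with the convention `0·log(·/0) = 0`. -/
noncomputable def IEnt {m : ℕ} (w : Fin m → ℝ) : ℝ :=
  ∑ i, w i * Real.logb 2 ((∑ j, w j) / w i)

/-- ℓ∞ norm (max coordinate) of a nonnegative vector. -/
noncomputable def linf {m : ℕ} [NeZero m] (w : Fin m → ℝ) : ℝ :=
  Finset.univ.sup' Finset.univ_nonempty w

open Real Finset

namespace Real

lemma mul_log_div_eq (S x : ℝ) (hS : S ≠ 0) : x * log (S / x) = log S * x + negMulLog x := by
  rcases eq_or_ne x 0 with rfl | hx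
  · simp
  · rw [log_div hS hx, negMulLog]; ring

lemma concaveOn_mul_log_div {S : ℝ} (hS : S ≠ 0) :
    ConcaveOn ℝ (Set.Ici 0) fun x ↦ x * log (S / x) := by
  simp_rw [mul_log_div_eq S _ hS]
  exact ((LinearMap.mulLeft ℝ (log S)).concaveOn (convex_Ici 0)).add concaveOn_negMulLog

lemma mul_log_div_nonneg {S x : ℝ} (hx : 0 ≤ x) (hxS : x ≤ S) : 0 ≤ x * log (S / x) := by
  rcases hx.eq_or_lt with rfl | hx
  · simp
  · exact mul_nonneg hx.le (log_nonneg ((one_le_div hx).mpr hxS))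

lemma mul_log_div_le_sub {S x : ℝ} (hS : 0 < S) (hx : 0 < x) : x * log (S / x) ≤ S - x :=
  calc x * log (S / x) ≤ x * (S / x - 1) :=
        mul_le_mul_of_nonneg_left (log_le_sub_one_of_pos (div_pos hS hx)) hx.le
    _ = S - x := by field_simp

lemma mul_log_div_le_mul_log_div {S x c : ℝ} (hS : 0 < S) (hx : 0 ≤ x) (hxc : x ≤ c) :
    x * log (S / c) ≤ x * log (S / x) := by
  rcases hx.eq_or_lt with rfl | hx
  · simp
  · exact mul_le_mul_of_nonneg_left
      (log_le_log (div_pos hS (hx.trans_le hxc)) (div_le_div_of_nonneg_left hS.le hx hxc)) hx.le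

end Real

namespace Finset

variable {ι : Type*} (s : Finset ι) {w : ι → ℝ} {S : ℝ}

lemma sum_mul_log_div_le_sum_mul_log_div (hS : 0 < S) {c : ℝ} (hw : ∀ i ∈ s, 0 ≤ w i)
    (hwc : ∀ i ∈ s, w i ≤ c) :
    (∑ i ∈ s, w i) * log (S / c) ≤ ∑ i ∈ s, w i * log (S / w i) := by
  rw [sum_mul]
  exact sum_le_sum fun i hi ↦ mul_log_div_le_mul_log_div hS (hw i hi) (hwc i hi)

lemma sum_mul_log_div_le_mul_log_card (hS : 0 < S) (hw : ∀ i ∈ s, 0 ≤ w i)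
    (hW : 0 < ∑ i ∈ s, w i) :
    ∑ i ∈ s, w i * log (S / w i) ≤ (∑ i ∈ s, w i) * log (#s * S / ∑ i ∈ s, w i) := by
  have hn : (0 : ℝ) < #s := by exact_mod_cast card_pos.mpr (nonempty_of_sum_ne_zero hW.ne')
  have := (concaveOn_mul_log_div hS.ne').le_map_centerMass (t := s) (w := fun _ ↦ (1 : ℝ))
    (p := w) (fun _ _ ↦ zero_le_one) (by simpa using hn) hw
  simp only [centerMass, sum_const, nsmul_eq_mul, mul_one, one_mul,
    Function.comp_apply, smul_eq_mul] at this
  calc ∑ i ∈ s, w i * log (S / w i) = #s * ((#s : ℝ)⁻¹ * ∑ i ∈ s, w i * log (S / w i)) := by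
        field_simp
    _ ≤ #s * ((#s : ℝ)⁻¹ * ∑ i ∈ s, w i) * log (S / ((#s : ℝ)⁻¹ * ∑ i ∈ s, w i)) := by
        rw [mul_assoc]; exact mul_le_mul_of_nonneg_left this hn.le
    _ = (∑ i ∈ s, w i) * log (#s * S / ∑ i ∈ s, w i) := by
        congr 2 <;> field_simp

end Finset

lemma four_mul_sub_le_mul {n S M : ℝ} (hn : 0 < n) (hS : 0 ≤ S) (hSM : S ≤ n * M) :
    4 * (S - M) ≤ n * S := by
  nlinarith [mul_nonneg (sq_nonneg (n - 2)) hS]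

section MaxEntry

variable {ι : Type*} [Fintype ι] [DecidableEq ι] (v : ι → ℝ) {i₀ : ι}

lemma sub_mul_log_div_min_le_sum_mul_log_div (hv : ∀ i, 0 ≤ v i) (hmax : ∀ i, v i ≤ v i₀)
    (h : v i₀ < ∑ i, v i) :
    ((∑ i, v i) - v i₀) * log ((∑ i, v i) / min ((∑ i, v i) - v i₀) (v i₀)) ≤
      ∑ i, v i * log ((∑ j, v j) / v i) := by
  set S := ∑ i, v i
  have hS : 0 < S := (hv i₀).trans_lt h
  have hle_sum (s : Finset ι) {i : ι} (hi : i ∈ s) : v i ≤ ∑ j ∈ s, v j :=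
    single_le_sum (fun j _ ↦ hv j) hi
  have hrest : ∑ i ∈ univ.erase i₀, v i = S - v i₀ := sum_erase_eq_sub (mem_univ i₀)
  calc (S - v i₀) * log (S / min (S - v i₀) (v i₀))
      ≤ ∑ i ∈ univ.erase i₀, v i * log (S / v i) := by
        rw [← hrest]
        refine sum_mul_log_div_le_sum_mul_log_div _ hS (fun i _ ↦ hv i) fun i hi ↦ ?_
        exact le_min (hrest ▸ hle_sum _ hi) (hmax i)
    _ ≤ ∑ i, v i * log (S / v i) :=
        sum_le_sum_of_subset_of_nonneg (erase_subset _ _) fun i _ _ ↦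
          mul_log_div_nonneg (hv i) (hle_sum _ (mem_univ i))

lemma sum_mul_log_div_le_two_mul (hv : ∀ i, 0 ≤ v i) (hmax : ∀ i, v i ≤ v i₀)
    (h : v i₀ < ∑ i, v i) :
    ∑ i, v i * log ((∑ j, v j) / v i) ≤
      2 * ((∑ i, v i) - v i₀) * log (Fintype.card ι * (∑ i, v i) / ((∑ i, v i) - v i₀)) := by
  set S := ∑ i, v i
  set n : ℝ := (Fintype.card ι : ℝ)
  have hS : 0 < S := (hv i₀).trans_lt h
  have hR : 0 < S - v i₀ := sub_pos.mpr h
  have hn : 0 < n := Nat.cast_pos.mpr (Fintype.card_pos_iff.mpr ⟨i₀⟩)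
  have hSn : S ≤ n * v i₀ := by
    simpa [n] using sum_le_sum fun i (_ : i ∈ univ) ↦ hmax i
  have hM : 0 < v i₀ := pos_of_mul_pos_right (hS.trans_le hSn) hn.le
  have hlog : 1 ≤ log (n * S / (S - v i₀)) := by
    rw [le_log_iff_exp_le (by positivity), le_div_iff₀ hR]
    linarith [mul_le_mul_of_nonneg_right exp_one_lt_three.le hR.le,
      four_mul_sub_le_mul hn hS.le hSn]
  have hrest : ∑ i ∈ univ.erase i₀, v i = S - v i₀ := sum_erase_eq_sub (mem_univ i₀)
  have hmax_term : v i₀ * log (S / v i₀) ≤ (S - v i₀) * log (n * S / (S - v i₀)) :=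
    (mul_log_div_le_sub hS hM).trans (le_mul_of_one_le_right hR.le hlog)
  have hrest_terms : ∑ i ∈ univ.erase i₀, v i * log (S / v i) ≤
      (S - v i₀) * log (n * S / (S - v i₀)) := by
    refine (sum_mul_log_div_le_mul_log_card _ hS (fun i _ ↦ hv i) (hrest ▸ hR)).trans ?_
    have hcard : 0 < #(univ.erase i₀) :=
      card_pos.mpr (nonempty_of_sum_ne_zero (hrest ▸ hR.ne'))
    rw [hrest]
    gcongr
    exact Nat.cast_le.mpr (card_le_univ _)
  rw [← add_sum_erase _ _ (mem_univ i₀)]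
  linarith

end MaxEntry

lemma IEnt_eq_sum_mul_log_div {m : ℕ} (w : Fin m → ℝ) :
    IEnt w = (∑ i, w i * log ((∑ j, w j) / w i)) / log 2 := by
  simp only [IEnt, logb, ← mul_div_assoc, sum_div]

/-- Entropy impurity bounds: for nonzero `v ∈ ℝ₊^k` with `‖v‖₁ > ‖v‖_∞`,
`(‖v‖₁ − ‖v‖_∞)·log(‖v‖₁ / min{‖v‖₁ − ‖v‖_∞, ‖v‖_∞}) ≤ I_Ent(v) ≤
 2(‖v‖₁ − ‖v‖_∞)·log(k·‖v‖₁ / (‖v‖₁ − ‖v‖_∞))`. -/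
theorem stmt8 {k : ℕ} [NeZero k] (v : Fin k → ℝ) (hv : ∀ i, 0 ≤ v i)
    (h : linf v < ∑ i, v i) :
    ((∑ i, v i) - linf v) *
        Real.logb 2 ((∑ i, v i) / min ((∑ i, v i) - linf v) (linf v)) ≤ IEnt v ∧
    IEnt v ≤ 2 * ((∑ i, v i) - linf v) *
        Real.logb 2 ((k : ℝ) * (∑ i, v i) / ((∑ i, v i) - linf v)) := by
  obtain ⟨i₀, -, hi₀ : linf v = v i₀⟩ := exists_mem_eq_sup' univ_nonempty v
  have hmax : ∀ i, v i ≤ v i₀ := fun i ↦ hi₀ ▸ le_sup' v (mem_univ i)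
  rw [hi₀] at h ⊢
  have hlog2 : 0 < log 2 := log_pos one_lt_two
  simp only [IEnt_eq_sum_mul_log_div, logb, ← mul_div_assoc]
  constructor
  · exact div_le_div_of_nonneg_right (sub_mul_log_div_min_le_sum_mul_log_div v hv hmax h) hlog2.le
  · simpa using div_le_div_of_nonneg_right (sum_mul_log_div_le_two_mul v hv hmax h) hlog2.le
end

section
/- For every nonzero v ∈ ℝ₊^k and every coordinate i ∈ {1,…,k}, the entropy impurity satisfies (‖v‖₁ − ‖v‖_∞)·max{1, log(‖v‖₁/(‖v‖₁ − ‖v‖_∞))} ≤ I_Ent(v) ≤ 2(‖v‖₁ − vᵢ)·log(2k‖v‖₁/(‖v‖₁ − vᵢ)), where the left inequality assumes ‖v‖₁ > ‖v‖_∞ and the right inequality assumes ‖v‖₁ > vᵢ. -/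
/-!
Write `S = ∑ j, v j` and `φ x = x logb 2 (S / x)`, so that `IEnt v = ∑ j, φ (v j)` with every term
nonnegative. For the lower bound, drop the largest coordinate: each remaining one is at most `S / 2`,
hence `φ x ≥ x`, and `φ` is subadditive, so the remaining terms add up to at least `S - ‖v‖_∞` and
to at least `φ (S - ‖v‖_∞)`. For the upper bound, `φ (v i) ≤ (S - v i) / log 2` because
`log y ≤ y - 1`, while by concavity of `φ` the other coordinates contribute at most
`(S - v i) logb 2 (k S / (S - v i))`; as `1 / log 2 < 2`, the two add up to the claimed bound.
-/

open Real Finset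

section MulLogbDiv

variable {S x : ℝ}

theorem mul_logb_div_le_mul_logb_div_of_le {y : ℝ} (hS : 0 ≤ S) (hx : 0 ≤ x) (hxy : x ≤ y) :
    x * logb 2 (S / y) ≤ x * logb 2 (S / x) := by
  rcases hx.eq_or_lt with rfl | hx
  · simp
  rcases hS.eq_or_lt with rfl | hS
  · simp
  refine mul_le_mul_of_nonneg_left ?_ hx.le
  exact logb_le_logb_of_le one_lt_two (div_pos hS (hx.trans_le hxy))
    (div_le_div_of_nonneg_left hS.le hx hxy)

theorem mul_logb_div_nonneg (hx : 0 ≤ x) (hxS : x ≤ S) : 0 ≤ x * logb 2 (S / x) := by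
  rcases hx.eq_or_lt with rfl | hx
  · simp
  simpa [div_self (hx.trans_le hxS).ne'] using
    mul_logb_div_le_mul_logb_div_of_le (hx.le.trans hxS) hx.le hxS

theorem le_mul_logb_div (hx : 0 ≤ x) (h : 2 * x ≤ S) : x ≤ x * logb 2 (S / x) := by
  rcases hx.eq_or_lt with rfl | hx
  · simp
  have hS : 0 < S := by linarith
  simpa [div_div_cancel₀ hS.ne'] using
    mul_logb_div_le_mul_logb_div_of_le (y := S / 2) hS.le hx.le (by linarith)

/-- Tangent-line bound for the concave map `x ↦ x logb 2 (S / x)` at the point `x = S / C`. -/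
theorem mul_logb_div_le_tangent {C : ℝ} (hS : 0 < S) (hC : 0 < C) (hx : 0 ≤ x) :
    x * logb 2 (S / x) ≤ x * logb 2 C + (S / C - x) / log 2 := by
  rcases hx.eq_or_lt with rfl | hx
  · simpa using div_nonneg (div_pos hS hC).le (log_pos one_lt_two).le
  have hsplit : logb 2 (S / x) = logb 2 (S / (x * C)) + logb 2 C := by
    rw [← logb_mul (by positivity) hC.ne']
    field_simp
  have hlog : x * log (S / (x * C)) ≤ S / C - x := calc
    x * log (S / (x * C)) ≤ x * (S / (x * C) - 1) :=
      mul_le_mul_of_nonneg_left (log_le_sub_one_of_pos (by positivity)) hx.le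
    _ = S / C - x := by field_simp
  rw [hsplit, mul_add, add_comm]
  gcongr
  rw [logb, ← mul_div_assoc]
  gcongr

theorem mul_logb_div_le_sub_div_log_two (hS : 0 < S) (hx : 0 ≤ x) :
    x * logb 2 (S / x) ≤ (S - x) / log 2 := by
  simpa using mul_logb_div_le_tangent hS one_pos hx

end MulLogbDiv

section SumMulLogbDiv

variable {ι : Type*} {S : ℝ} (T : Finset ι) {v : ι → ℝ}

theorem sum_mul_logb_div_sum_le (hS : 0 ≤ S) (hv : ∀ j ∈ T, 0 ≤ v j) :
    (∑ j ∈ T, v j) * logb 2 (S / ∑ j ∈ T, v j) ≤ ∑ j ∈ T, v j * logb 2 (S / v j) := by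
  rw [sum_mul]
  exact sum_le_sum fun j hj =>
    mul_logb_div_le_mul_logb_div_of_le hS (hv j hj) (single_le_sum hv hj)

theorem sum_mul_logb_div_le_of_card_le {n : ℝ} (hS : 0 < S) (hv : ∀ j ∈ T, 0 ≤ v j)
    (hn : (#T : ℝ) ≤ n) :
    ∑ j ∈ T, v j * logb 2 (S / v j) ≤ (∑ j ∈ T, v j) * logb 2 (n * S / ∑ j ∈ T, v j) := by
  set σ := ∑ j ∈ T, v j
  rcases (sum_nonneg hv).eq_or_lt with hσ | hσ
  · have hv0 : ∀ j ∈ T, v j = 0 := (sum_eq_zero_iff_of_nonneg hv).mp hσ.symm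
    rw [show σ = 0 from hσ.symm, zero_mul]
    exact (sum_eq_zero fun j hj => by simp [hv0 j hj]).le
  obtain ⟨j, hj⟩ : T.Nonempty := nonempty_of_sum_ne_zero hσ.ne'
  have hn0 : 0 < n := by
    have : (1 : ℝ) ≤ #T := by exact_mod_cast card_pos.mpr ⟨j, hj⟩
    linarith
  set C := n * S / σ
  have hC : 0 < C := by positivity
  have hSC : S / C = σ / n := by simp only [C]; field_simp
  calc ∑ j ∈ T, v j * logb 2 (S / v j)
      ≤ ∑ j ∈ T, (v j * logb 2 C + (S / C - v j) / log 2) :=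
        sum_le_sum fun j hj => mul_logb_div_le_tangent hS hC (hv j hj)
    _ = σ * logb 2 C + (#T * (σ / n) - σ) / log 2 := by
        rw [sum_add_distrib, ← sum_mul, ← sum_div, sum_sub_distrib, sum_const, nsmul_eq_mul, hSC]
    _ ≤ σ * logb 2 C := by
        have : (#T : ℝ) * (σ / n) ≤ σ := by
          calc (#T : ℝ) * (σ / n) ≤ n * (σ / n) := by gcongr
            _ = σ := by field_simp
        have := div_nonpos_of_nonpos_of_nonneg (sub_nonpos.mpr this) (log_pos one_lt_two).le
        linarith

end SumMulLogbDiv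

section IEnt

variable {m : ℕ} {v : Fin m → ℝ}

theorem IEnt_eq_add_sum_erase (i : Fin m) :
    IEnt v = v i * logb 2 ((∑ j, v j) / v i) +
      ∑ j ∈ univ.erase i, v j * logb 2 ((∑ j, v j) / v j) :=
  (add_sum_erase _ _ (mem_univ i)).symm

theorem sum_erase_le_IEnt (hv : ∀ j, 0 ≤ v j) (i : Fin m) :
    ∑ j ∈ univ.erase i, v j * logb 2 ((∑ j, v j) / v j) ≤ IEnt v :=
  sum_le_sum_of_subset_of_nonneg (subset_univ _) fun j _ _ =>
    mul_logb_div_nonneg (hv j) (single_le_sum (fun l _ => hv l) (mem_univ j))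

theorem le_IEnt_of_forall_le (hv : ∀ j, 0 ≤ v j) {i : Fin m} (hi : ∀ j, v j ≤ v i) :
    ((∑ j, v j) - v i) * max 1 (logb 2 ((∑ j, v j) / ((∑ j, v j) - v i))) ≤ IEnt v := by
  set S := ∑ j, v j
  have hrest := sum_erase_eq_sub (f := v) (mem_univ i)
  have hS : 0 ≤ S := sum_nonneg fun j _ => hv j
  have hvT : ∀ j ∈ univ.erase i, 0 ≤ v j := fun j _ => hv j
  refine le_trans ?_ (sum_erase_le_IEnt hv i)
  rw [mul_max_of_nonneg _ _ (hrest ▸ sum_nonneg hvT), mul_one]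
  refine max_le ?_ (hrest ▸ sum_mul_logb_div_sum_le _ hS hvT)
  rw [← hrest]
  refine sum_le_sum fun j hj => le_mul_logb_div (hv j) ?_
  have : v j ≤ S - v i := hrest ▸ single_le_sum hvT hj
  linarith [hi j]

theorem IEnt_le_two_mul_logb (hv : ∀ j, 0 ≤ v j) (i : Fin m) (hi : v i < ∑ j, v j) :
    IEnt v ≤ 2 * ((∑ j, v j) - v i) * logb 2 (2 * m * (∑ j, v j) / ((∑ j, v j) - v i)) := by
  set S := ∑ j, v j
  set D := S - v i
  have hD : 0 < D := sub_pos.mpr hi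
  have hS : 0 < S := (hv i).trans_lt hi
  have hrest := sum_erase_eq_sub (f := v) (mem_univ i)
  have hm : (1 : ℝ) ≤ m := by exact_mod_cast Fin.pos i
  have hcard : (#(univ.erase i) : ℝ) ≤ m := by
    exact_mod_cast (card_erase_le).trans (card_fin m).le
  have hL : 0 ≤ logb 2 (m * S / D) :=
    logb_nonneg one_lt_two ((one_le_div hD).mpr (by nlinarith [hv i]))
  have hlog2 : 1 / log 2 < 2 := by
    rw [div_lt_iff₀ (log_pos one_lt_two)]
    linarith [log_two_gt_d9]
  calc IEnt v
      ≤ D / log 2 + D * logb 2 (m * S / D) := by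
        rw [IEnt_eq_add_sum_erase i]
        gcongr
        · exact mul_logb_div_le_sub_div_log_two hS (hv i)
        · simpa only [hrest] using sum_mul_logb_div_le_of_card_le _ hS (fun j _ => hv j) hcard
    _ ≤ 2 * D * (1 + logb 2 (m * S / D)) := by
        have : D / log 2 ≤ 2 * D := by
          rw [div_eq_mul_one_div]; nlinarith
        nlinarith [mul_nonneg hD.le hL]
    _ = 2 * D * logb 2 (2 * m * S / D) := by
        rw [mul_assoc 2 (m : ℝ), mul_div_assoc 2,
          logb_mul two_ne_zero (div_pos (by positivity) hD).ne', logb_self_eq_one one_lt_two]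

end IEnt

theorem stmt9_general {k : ℕ} [NeZero k] (v : Fin k → ℝ) (hv : ∀ j, 0 ≤ v j)
    (i : Fin k) :
    ((linf v < ∑ j, v j) →
      ((∑ j, v j) - linf v) *
          max 1 (Real.logb 2 ((∑ j, v j) / ((∑ j, v j) - linf v))) ≤ IEnt v) ∧
    ((v i < ∑ j, v j) →
      IEnt v ≤ 2 * ((∑ j, v j) - v i) *
          Real.logb 2 (2 * (k : ℝ) * (∑ j, v j) / ((∑ j, v j) - v i))) := by
  refine ⟨fun _ => ?_, IEnt_le_two_mul_logb hv i⟩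
  obtain ⟨j, -, hj⟩ := exists_mem_eq_sup' univ_nonempty v
  have hmax : ∀ l, v l ≤ v j := fun l => hj ▸ le_sup' v (mem_univ l)
  rw [linf, hj]
  exact le_IEnt_of_forall_le hv hmax

/-- For nonzero `v ∈ ℝ₊^k` and a coordinate `i`:
if `‖v‖₁ > ‖v‖_∞` then `(‖v‖₁ − ‖v‖_∞)·max{1, log(‖v‖₁/(‖v‖₁ − ‖v‖_∞))} ≤ I_Ent(v)`;
if `‖v‖₁ > vᵢ` then `I_Ent(v) ≤ 2(‖v‖₁ − vᵢ)·log(2k‖v‖₁/(‖v‖₁ − vᵢ))`. -/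
theorem stmt9 {k : ℕ} [NeZero k] (v : Fin k → ℝ) (hv : ∀ j, 0 ≤ v j) (hv0 : v ≠ 0)
    (i : Fin k) :
    ((linf v < ∑ j, v j) →
      ((∑ j, v j) - linf v) *
          max 1 (Real.logb 2 ((∑ j, v j) / ((∑ j, v j) - linf v))) ≤ IEnt v) ∧
    ((v i < ∑ j, v j) →
      IEnt v ≤ 2 * ((∑ j, v j) - v i) *
          Real.logb 2 (2 * (k : ℝ) * (∑ j, v j) / ((∑ j, v j) - v i))) :=
  stmt9_general v hv i
end

section
/- Let u ∈ ℝ₊^k with u₁ ≥ u₂ ≥ ⋯ ≥ u_k > 0. Let z⁽¹⁾, z⁽²⁾ ∈ {0,1}^k be nonzero orthogonal vectors, let i* = min{ i : z⁽¹⁾ᵢ = 1 or z⁽²⁾ᵢ = 1 }, and set v⁽¹⁾ = e_{i*} and v⁽²⁾ = z⁽¹⁾ + z⁽²⁾ − e_{i*} (assume v⁽²⁾ ≠ 0). Then I_Gini(u ∘ v⁽¹⁾) + I_Gini(u ∘ v⁽²⁾) ≤ I_Gini(u ∘ z⁽¹⁾) + I_Gini(u ∘ z⁽²⁾). -/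
/-- Gini impurity in the form `I_Gini(w) = ‖w‖₁ − (Σᵢ wᵢ²)/‖w‖₁` (equal to `0` when `w = 0`). -/
noncomputable def IG {k : ℕ} (w : Fin k → ℝ) : ℝ :=
  (∑ i, w i) - (∑ i, (w i) ^ 2) / (∑ i, w i)

/-!
For a 0/1 vector `z` the impurity `I_Gini(u ∘ z)` depends only on the power sums `u ⬝ z` and
`u² ⬝ z`, which are linear in `z`. With `a = u_{i*}` and, say, `i*` in the support of `z⁽¹⁾`, the
claim becomes an inequality between `a` and the power sums `(s₁, q₁)`, `(s₂, q₂)` of `z⁽¹⁾`, `z⁽²⁾`.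
Because `a` is one of the weights on the support of `z⁽¹⁾` and the largest weight on both supports,
`a ≤ s₁`, `a² ≤ q₁ ≤ a s₁` and `q₂ ≤ a s₂`; together with `q₂ ≤ s₂²` this suffices, after clearing
denominators.
-/

open Matrix

/-- `I_Gini` in terms of the power sums `s = ∑ wᵢ` and `q = ∑ wᵢ²`. -/
noncomputable def gini (s q : ℝ) : ℝ := s - q / s

lemma gini_self_sq {a : ℝ} (ha : a ≠ 0) : gini a (a ^ 2) = 0 := by
  rw [gini, sq, mul_div_cancel_right₀ _ ha, sub_self]

lemma gini_exchange {a s₁ q₁ s₂ q₂ : ℝ} (ha : 0 < a) (has₁ : a ≤ s₁) (haq₁ : a ^ 2 ≤ q₁)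
    (hq₁ : q₁ ≤ a * s₁) (hs₂ : 0 < s₂) (hq₂ : q₂ ≤ a * s₂) (hq₂s₂ : q₂ ≤ s₂ ^ 2) :
    gini a (a ^ 2) + gini (s₁ + s₂ - a) (q₁ + q₂ - a ^ 2) ≤ gini s₁ q₁ + gini s₂ q₂ := by
  rw [gini_self_sq ha.ne', zero_add, ← sub_nonneg]
  set t := s₁ - a
  set r := q₁ - a ^ 2
  have hs₁ : 0 < s₁ := ha.trans_le has₁
  have hS : 0 < s₁ + s₂ - a := by linarith
  have key : gini s₁ q₁ + gini s₂ q₂ - gini (s₁ + s₂ - a) (q₁ + q₂ - a ^ 2) =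
      (t ^ 2 * (a * s₂ - q₂) + a * t * (s₂ ^ 2 - q₂) + r * s₂ * (a - s₂)) /
        (s₁ * s₂ * (s₁ + s₂ - a)) := by
    simp only [gini, t, r]
    field_simp
    ring
  rw [key]
  refine div_nonneg ?_ (by positivity)
  have ht : 0 ≤ t := sub_nonneg.2 has₁
  have hr : 0 ≤ r := sub_nonneg.2 haq₁
  have hrt : r ≤ a * t := by simp only [r, t]; linarith
  have hq₂' : 0 ≤ a * s₂ - q₂ := sub_nonneg.2 hq₂
  rcases le_total s₂ a with hs₂a | has₂
  · have := sub_nonneg.2 hs₂a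
    have := sub_nonneg.2 hq₂s₂
    positivity
  · -- the same numerator, regrouped so that each term is nonnegative when `a ≤ s₂`
    have h : 0 ≤ t ^ 2 * (a * s₂ - q₂) + a * t * (a * s₂ - q₂) + s₂ * (s₂ - a) * (a * t - r) := by
      have := sub_nonneg.2 has₂
      have := sub_nonneg.2 hrt
      positivity
    linarith

section ZeroOne

variable {ι : Type*} {u z z' : ι → ℝ}

lemma nonneg_of_zero_one (hz : ∀ j, z j = 0 ∨ z j = 1) : 0 ≤ z := fun j => by
  rcases hz j with h | h <;> simp [h]

lemma zero_one_add (hz : ∀ j, z j = 0 ∨ z j = 1) (hz' : ∀ j, z' j = 0 ∨ z' j = 1)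
    (horth : ∀ j, z j * z' j = 0) : ∀ j, (z + z') j = 0 ∨ (z + z') j = 1 := fun j => by
  have := horth j
  rcases hz j with h | h <;> rcases hz' j with h' | h' <;> simp_all

lemma zero_one_sub_single [DecidableEq ι] (hz : ∀ j, z j = 0 ∨ z j = 1) {i : ι} (hi : z i = 1) :
    ∀ j, (z - Pi.single i 1 : ι → ℝ) j = 0 ∨ (z - Pi.single i 1 : ι → ℝ) j = 1 := fun j => by
  rcases eq_or_ne j i with rfl | hj
  · simp [hi]
  · simpa [hj] using hz j

variable [Fintype ι]

lemma le_dotProduct_of_eq_one (hu : 0 ≤ u) (hz : 0 ≤ z) {i : ι} (hi : z i = 1) :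
    u i ≤ u ⬝ᵥ z := by
  simpa [hi, dotProduct] using
    Finset.single_le_sum (fun j _ => mul_nonneg (hu j) (hz j)) (Finset.mem_univ i)

lemma sq_dotProduct_le_mul_dotProduct {a : ℝ} (hu : 0 ≤ u) (hz : 0 ≤ z)
    (hbound : ∀ j, z j ≠ 0 → u j ≤ a) : (u ^ 2) ⬝ᵥ z ≤ a * (u ⬝ᵥ z) := by
  rw [dotProduct, dotProduct, Finset.mul_sum]
  refine Finset.sum_le_sum fun j _ => ?_
  rcases eq_or_ne (z j) 0 with h | h
  · simp [h]
  · calc (u ^ 2) j * z j = u j * (u j * z j) := by rw [Pi.pow_apply]; ring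
      _ ≤ a * (u j * z j) := mul_le_mul_of_nonneg_right (hbound j h) (mul_nonneg (hu j) (hz j))

end ZeroOne

lemma IG_mul_eq_gini {k : ℕ} {u z : Fin k → ℝ} (hz : ∀ j, z j = 0 ∨ z j = 1) :
    IG (u * z) = gini (u ⬝ᵥ z) ((u ^ 2) ⬝ᵥ z) := by
  have hsq : ∀ j, (u j * z j) ^ 2 = u j ^ 2 * z j := fun j => by
    rcases hz j with h | h <;> simp [h]
  simp only [IG, gini, dotProduct, Pi.mul_apply, Pi.pow_apply, hsq]

theorem IG_exchange_of_left_eq_one {k : ℕ} {u z₁ z₂ : Fin k → ℝ} {i : Fin k}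
    (hpos : ∀ j, 0 < u j)
    (hz₁ : ∀ j, z₁ j = 0 ∨ z₁ j = 1) (hz₂ : ∀ j, z₂ j = 0 ∨ z₂ j = 1) (hz₂0 : z₂ ≠ 0)
    (horth : ∀ j, z₁ j * z₂ j = 0) (hi : z₁ i = 1)
    (hmax : ∀ j, (z₁ j = 1 ∨ z₂ j = 1) → u j ≤ u i) :
    IG (u * Pi.single i 1) + IG (u * (z₁ + z₂ - Pi.single i 1)) ≤ IG (u * z₁) + IG (u * z₂) := by
  have hu : 0 ≤ u := fun j => (hpos j).le
  have hz₁' := nonneg_of_zero_one hz₁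
  have hz₂' := nonneg_of_zero_one hz₂
  have hsingle : ∀ j, (Pi.single i 1 : Fin k → ℝ) j = 0 ∨ (Pi.single i 1 : Fin k → ℝ) j = 1 :=
    fun j => by rcases eq_or_ne j i with rfl | hj <;> simp [*]
  have hz₂i : z₂ i = 0 := by simpa [hi] using horth i
  have hv := zero_one_sub_single (zero_one_add hz₁ hz₂ horth) (i := i) (by simp [hi, hz₂i])
  rw [IG_mul_eq_gini hsingle, IG_mul_eq_gini hv, IG_mul_eq_gini hz₁, IG_mul_eq_gini hz₂]
  simp only [dotProduct_sub, dotProduct_add, dotProduct_single_one, Pi.pow_apply]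
  obtain ⟨j, hj⟩ : ∃ j, z₂ j = 1 := by
    by_contra! h
    exact hz₂0 (funext fun j => (hz₂ j).resolve_right (h j))
  have hsupp₁ : ∀ j, z₁ j ≠ 0 → u j ≤ u i := fun j h => hmax j (.inl ((hz₁ j).resolve_left h))
  have hsupp₂ : ∀ j, z₂ j ≠ 0 → u j ≤ u i := fun j h => hmax j (.inr ((hz₂ j).resolve_left h))
  have hs₂ : u j ≤ u ⬝ᵥ z₂ := le_dotProduct_of_eq_one hu hz₂' hj
  refine gini_exchange (hpos i) (le_dotProduct_of_eq_one hu hz₁' hi)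
    (le_dotProduct_of_eq_one (pow_nonneg hu 2) hz₁' hi)
    (sq_dotProduct_le_mul_dotProduct hu hz₁' hsupp₁)
    ((hpos j).trans_le hs₂) (sq_dotProduct_le_mul_dotProduct hu hz₂' hsupp₂) ?_
  rw [sq (u ⬝ᵥ z₂)]
  exact sq_dotProduct_le_mul_dotProduct hu hz₂' fun j h =>
    le_dotProduct_of_eq_one hu hz₂' ((hz₂ j).resolve_left h)

theorem stmt10_general {k : ℕ} (u z1 z2 : Fin k → ℝ)
    (hdec : ∀ i j : Fin k, i ≤ j → u j ≤ u i) (hpos : ∀ i, 0 < u i)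
    (h01a : ∀ i, z1 i = 0 ∨ z1 i = 1) (h01b : ∀ i, z2 i = 0 ∨ z2 i = 1)
    (hz1 : z1 ≠ 0) (hz2 : z2 ≠ 0)
    (horth : ∑ i, z1 i * z2 i = 0)
    (istar : Fin k)
    (histar1 : z1 istar = 1 ∨ z2 istar = 1)
    (histar2 : ∀ j, (z1 j = 1 ∨ z2 j = 1) → istar ≤ j)
    (v1 v2 : Fin k → ℝ)
    (hv1 : v1 = fun j => if j = istar then (1 : ℝ) else 0)
    (hv2 : v2 = z1 + z2 - v1) :
    IG (fun j => u j * v1 j) + IG (fun j => u j * v2 j) ≤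
      IG (fun j => u j * z1 j) + IG (fun j => u j * z2 j) := by
  obtain rfl : v1 = Pi.single istar 1 := by
    rw [hv1]; funext j; simp [Pi.single_apply]
  subst hv2
  have horth' : ∀ j, z1 j * z2 j = 0 := fun j =>
    (Finset.sum_eq_zero_iff_of_nonneg fun j _ =>
      mul_nonneg (nonneg_of_zero_one h01a j) (nonneg_of_zero_one h01b j)).1
        horth j (Finset.mem_univ j)
  have hmax : ∀ j, (z1 j = 1 ∨ z2 j = 1) → u j ≤ u istar := fun j hj => hdec _ _ (histar2 j hj)
  rcases histar1 with h | h
  · exact IG_exchange_of_left_eq_one hpos h01a h01b hz2 horth' h hmax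
  · have := IG_exchange_of_left_eq_one hpos h01b h01a hz1
      (fun j => (mul_comm _ _).trans (horth' j)) h fun j hj => hmax j hj.symm
    rw [add_comm z2 z1, add_comm (IG (u * z2))] at this
    exact this

/-- Gini exchange claim: for `u₁ ≥ ⋯ ≥ u_k > 0`, nonzero orthogonal `z⁽¹⁾, z⁽²⁾ ∈ {0,1}^k`,
`i*` the least index covered by `z⁽¹⁾` or `z⁽²⁾`, `v⁽¹⁾ = e_{i*}` and
`v⁽²⁾ = z⁽¹⁾ + z⁽²⁾ − e_{i*}` (nonzero), we have
`I_Gini(u∘v⁽¹⁾) + I_Gini(u∘v⁽²⁾) ≤ I_Gini(u∘z⁽¹⁾) + I_Gini(u∘z⁽²⁾)`. -/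
theorem stmt10 {k : ℕ} (u z1 z2 : Fin k → ℝ)
    (hdec : ∀ i j : Fin k, i ≤ j → u j ≤ u i) (hpos : ∀ i, 0 < u i)
    (h01a : ∀ i, z1 i = 0 ∨ z1 i = 1) (h01b : ∀ i, z2 i = 0 ∨ z2 i = 1)
    (hz1 : z1 ≠ 0) (hz2 : z2 ≠ 0)
    (horth : ∑ i, z1 i * z2 i = 0)
    (istar : Fin k)
    (histar1 : z1 istar = 1 ∨ z2 istar = 1)
    (histar2 : ∀ j, (z1 j = 1 ∨ z2 j = 1) → istar ≤ j)
    (v1 v2 : Fin k → ℝ)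
    (hv1 : v1 = fun j => if j = istar then (1 : ℝ) else 0)
    (hv2 : v2 = z1 + z2 - v1) (hv2ne : v2 ≠ 0) :
    IG (fun j => u j * v1 j) + IG (fun j => u j * v2 j) ≤
      IG (fun j => u j * z1 j) + IG (fun j => u j * z2 j) :=
  stmt10_general u z1 z2 hdec hpos h01a h01b hz1 hz2 horth istar histar1 histar2 v1 v2 hv1 hv2
end

section
/- Dominance algorithm guarantee: Let V be a finite set of nonzero vectors in ℝ₊^k, let I be an impurity measure, and suppose there exist α, β > 0 such that for every nonempty S ⊆ V, writing u^S = Σ_{v∈S} v, we have β(‖u^S‖₁ − ‖u^S‖_∞) ≤ I(u^S) ≤ α(‖u^S‖₁ − ‖u^S‖_∞). Partition V into groups V⁽¹⁾,…,V⁽ᵏ⁾ where V⁽ⁱ⁾ consists of the vectors whose i-th coordinate equals their ℓ_∞ norm (ties broken arbitrarily). Then Σᵢ I(Σ_{v∈V⁽ⁱ⁾} v) ≤ (α/β) · Σ_{v∈V} I(v). -/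
/-!
Charge every vector `v` the quantity `‖v‖₁ − v_{c(v)}`, which is `‖v‖₁ − ‖v‖_∞` because `c(v)` is
a dominant coordinate. For a group `S` of vectors sharing the coordinate `i`, the quantity
`‖u‖₁ − u_i` is linear in `u` and bounds `‖u‖₁ − ‖u‖_∞`, so the group costs at most `α` times its
charges, while each singleton `{v}` has impurity at least `β` times its charge.
-/

open Finset

section

variable {ι : Type*} [Fintype ι] [Nonempty ι]

/-- `‖u‖₁ − ‖u‖_∞` for a nonnegative vector `u`. -/
def l1SubSup (u : ι → ℝ) : ℝ := ∑ j, u j - univ.sup' univ_nonempty u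

lemma l1SubSup_le (u : ι → ℝ) (i : ι) : l1SubSup u ≤ ∑ j, u j - u i :=
  sub_le_sub_left (le_sup' u (mem_univ i)) _

lemma l1SubSup_eq_of_forall_le {u : ι → ℝ} {i : ι} (h : ∀ j, u j ≤ u i) :
    l1SubSup u = ∑ j, u j - u i :=
  congrArg _ (le_antisymm (sup'_le _ _ fun j _ => h j) (le_sup' u (mem_univ i)))

lemma l1SubSup_sum_le {α : Type*} (S : Finset α) (f : α → ι → ℝ) (i : ι) :
    l1SubSup (∑ a ∈ S, f a) ≤ ∑ a ∈ S, (∑ j, f a j - f a i) := by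
  refine (l1SubSup_le _ i).trans_eq ?_
  simp only [Finset.sum_apply, sum_sub_distrib]
  rw [sum_comm]

end

theorem stmt13_general {k : ℕ} [NeZero k] (V : Finset (Fin k → ℝ))
    (I : (Fin k → ℝ) → ℝ) (α β : ℝ) (hα : 0 < α) (hβ : 0 < β)
    (hbound : ∀ S : Finset (Fin k → ℝ), S ⊆ V → S.Nonempty →
      β * ((∑ i, (∑ v ∈ S, v) i) -
            Finset.univ.sup' Finset.univ_nonempty (∑ v ∈ S, v)) ≤ I (∑ v ∈ S, v) ∧
      I (∑ v ∈ S, v) ≤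
        α * ((∑ i, (∑ v ∈ S, v) i) -
              Finset.univ.sup' Finset.univ_nonempty (∑ v ∈ S, v)))
    (c : (Fin k → ℝ) → Fin k)
    (hc : ∀ v ∈ V, ∀ i, v i ≤ v (c v)) :
    ∑ i : Fin k,
        (if (V.filter (fun v => c v = i)).Nonempty
          then I (∑ v ∈ V.filter (fun v => c v = i), v) else 0)
      ≤ (α / β) * ∑ v ∈ V, I v := by
  set charge : (Fin k → ℝ) → ℝ := fun v => ∑ j, v j - v (c v)
  have group_le : ∀ i, (if (V.filter (fun v => c v = i)).Nonempty
      then I (∑ v ∈ V.filter (fun v => c v = i), v) else 0)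
        ≤ α * ∑ v ∈ V.filter (fun v => c v = i), charge v := by
    intro i
    split_ifs with hne
    · refine (hbound _ (filter_subset _ _) hne).2.trans (mul_le_mul_of_nonneg_left ?_ hα.le)
      refine (l1SubSup_sum_le _ id i).trans_eq (sum_congr rfl fun v hv => ?_)
      simp only [charge, id, (mem_filter.1 hv).2]
    · rw [not_nonempty_iff_eq_empty.1 hne, sum_empty, mul_zero]
  have single_le : ∀ v ∈ V, β * charge v ≤ I v := fun v hv => by
    have h := (hbound {v} (singleton_subset_iff.2 hv) (singleton_nonempty v)).1
    rw [sum_singleton] at h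
    rwa [← l1SubSup, l1SubSup_eq_of_forall_le (hc v hv)] at h
  calc _ ≤ ∑ i, α * ∑ v ∈ V.filter (fun v => c v = i), charge v := sum_le_sum fun i _ => group_le i
    _ = α / β * ∑ v ∈ V, β * charge v := by
      rw [← mul_sum, sum_fiberwise_of_maps_to (fun v _ => mem_univ (c v)), ← mul_sum]
      field_simp
    _ ≤ α / β * ∑ v ∈ V, I v := by
      gcongr with v hv
      exact single_le v hv

/-- Dominance algorithm guarantee: if the impurity `I` is sandwiched, for every nonempty
`S ⊆ V`, between `β(‖u^S‖₁ − ‖u^S‖_∞)` and `α(‖u^S‖₁ − ‖u^S‖_∞)` where `u^S = Σ_{v∈S} v`,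
then the partition of `V` by dominant coordinate (assignment `c`, ties arbitrary) has total
impurity at most `(α/β)·Σ_{v∈V} I(v)`. -/
theorem stmt13 {k : ℕ} [NeZero k] (V : Finset (Fin k → ℝ))
    (hV : ∀ v ∈ V, (∀ i, 0 ≤ v i) ∧ v ≠ 0)
    (I : (Fin k → ℝ) → ℝ) (α β : ℝ) (hα : 0 < α) (hβ : 0 < β)
    (hbound : ∀ S : Finset (Fin k → ℝ), S ⊆ V → S.Nonempty →
      β * ((∑ i, (∑ v ∈ S, v) i) -
            Finset.univ.sup' Finset.univ_nonempty (∑ v ∈ S, v)) ≤ I (∑ v ∈ S, v) ∧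
      I (∑ v ∈ S, v) ≤
        α * ((∑ i, (∑ v ∈ S, v) i) -
              Finset.univ.sup' Finset.univ_nonempty (∑ v ∈ S, v)))
    (c : (Fin k → ℝ) → Fin k)
    (hc : ∀ v ∈ V, ∀ i, v i ≤ v (c v)) :
    ∑ i : Fin k,
        (if (V.filter (fun v => c v = i)).Nonempty
          then I (∑ v ∈ V.filter (fun v => c v = i), v) else 0)
      ≤ (α / β) * ∑ v ∈ V, I v :=
  stmt13_general V I α β hα hβ hbound c hc
end

section
/- Let v ∈ ℝ₊^k with ‖v‖₁ > 0 and ‖v‖_∞ ≥ ‖v‖₁/2. Then I_Ent(v) ≤ ‖v‖_∞·log(‖v‖₁/‖v‖_∞) + (‖v‖₁−‖v‖_∞)·log(‖v‖₁/(‖v‖₁−‖v‖_∞)) + (‖v‖₁−‖v‖_∞)·log(k−1) ≤ 2(‖v‖₁−‖v‖_∞)·log(k‖v‖₁/(‖v‖₁−‖v‖_∞)), where the last right-hand side is interpreted as 0 when ‖v‖₁ = ‖v‖_∞. -/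
/-!
Work with the natural logarithm; every term scales by `1 / log 2`. Split off the largest
coordinate `M`: the remaining mass `R = S - M` lives on `k - 1` coordinates, so its entropy is at
most that of the uniform spread, by the pointwise bound `x log (y / x) ≤ y - x`. This is the first
inequality. For the second, the same bound gives `M log (S / M) ≤ R`, and `R ≤ S / 2` makes
`k S / R ≥ 4 > e`, so this extra `R` is absorbed by one more copy of `R log (k S / R)`.
-/

open Real Finset

theorem mul_log_div_le_sub {x y : ℝ} (hx : 0 < x) (hy : 0 < y) : x * log (y / x) ≤ y - x :=
  calc x * log (y / x) ≤ x * (y / x - 1) :=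
        mul_le_mul_of_nonneg_left (log_le_sub_one_of_pos (div_pos hy hx)) hx.le
    _ = y - x := by field_simp

theorem sum_mul_log_div_le_mul_log_card {ι : Type*} (s : Finset ι) {w : ι → ℝ}
    (hw : ∀ i ∈ s, 0 ≤ w i) (c : ℝ) :
    ∑ i ∈ s, w i * log (c / w i) ≤ (∑ i ∈ s, w i) * log (c * #s / ∑ i ∈ s, w i) := by
  rcases eq_or_ne c 0 with rfl | hc
  · simp
  set W := ∑ i ∈ s, w i
  have hW0 : 0 ≤ W := sum_nonneg hw
  rcases hW0.eq_or_lt with hW | hW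
  · have hzero := (sum_eq_zero_iff_of_nonneg hw).mp hW.symm
    rw [← hW, zero_mul]
    exact (sum_eq_zero fun i hi => by rw [hzero i hi, zero_mul]).le
  have hn : (0 : ℝ) < #s := by exact_mod_cast card_pos.mpr (nonempty_of_sum_ne_zero hW.ne')
  have pointwise : ∀ i ∈ s, w i * log (c / w i) ≤ w i * log (c * #s / W) + (W / #s - w i) := by
    intro i hi
    rcases (hw i hi).eq_or_lt with hwi | hwi
    · rw [← hwi]
      simp only [zero_mul, sub_zero, zero_add]
      positivity
    have hsplit : c / w i = c * #s / W * (W / #s / w i) := by field_simp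
    rw [hsplit, log_mul (by positivity) (by positivity), mul_add]
    gcongr
    exact mul_log_div_le_sub hwi (by positivity)
  calc ∑ i ∈ s, w i * log (c / w i)
      ≤ ∑ i ∈ s, (w i * log (c * #s / W) + (W / #s - w i)) := sum_le_sum pointwise
    _ = W * log (c * #s / W) + (#s * (W / #s) - W) := by
        rw [sum_add_distrib, ← sum_mul, sum_sub_distrib, sum_const, nsmul_eq_mul]
    _ = W * log (c * #s / W) := by field_simp; ring

theorem sum_mul_log_div_le_split_off {ι : Type*} [Fintype ι] [DecidableEq ι] {v : ι → ℝ}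
    (hv : ∀ i, 0 ≤ v i) (i₀ : ι) :
    ∑ i, v i * log ((∑ j, v j) / v i) ≤
      v i₀ * log ((∑ j, v j) / v i₀) +
        ((∑ j, v j) - v i₀) * log ((∑ j, v j) / ((∑ j, v j) - v i₀)) +
        ((∑ j, v j) - v i₀) * log (Fintype.card ι - 1) := by
  set S := ∑ j, v j
  have hrest : ∑ i ∈ univ.erase i₀, v i = S - v i₀ := sum_erase_eq_sub (mem_univ i₀)
  have hcard : (#(univ.erase i₀) : ℝ) = Fintype.card ι - 1 := by
    rw [card_erase_of_mem (mem_univ i₀), card_univ,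
      Nat.cast_pred (Fintype.card_pos_iff.mpr ⟨i₀⟩)]
  have hbound := sum_mul_log_div_le_mul_log_card (univ.erase i₀) (fun i _ => hv i) S
  rw [hrest, hcard] at hbound
  rw [← add_sum_erase _ _ (mem_univ i₀), add_assoc, add_le_add_iff_left]
  refine hbound.trans_eq ?_
  rcases (hrest ▸ sum_nonneg fun i _ => hv i : 0 ≤ S - v i₀).eq_or_lt with hR | hR
  · rw [← hR, zero_mul, zero_mul, zero_mul, add_zero]
  have hS : 0 < S := hR.trans_le (sub_le_self _ (hv i₀))
  have hk : 0 < (Fintype.card ι : ℝ) - 1 := by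
    rw [← hcard]
    exact_mod_cast card_pos.mpr (nonempty_of_sum_ne_zero (hrest ▸ hR.ne'))
  rw [mul_div_right_comm, log_mul (by positivity) hk.ne', mul_add]

theorem split_entropy_le_two_mul_log {S M k : ℝ} (hMS : M ≤ S) (hSM : S ≤ 2 * M) (hk : 2 ≤ k) :
    M * log (S / M) + (S - M) * log (S / (S - M)) + (S - M) * log (k - 1) ≤
      2 * (S - M) * log (k * S / (S - M)) := by
  rcases (sub_nonneg.mpr hMS).eq_or_lt with hR | hR
  · simp [sub_eq_zero.mp hR.symm]
  set R := S - M
  have hM : 0 < M := by linarith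
  have hS : 0 < S := by linarith
  have hentropy : M * log (S / M) ≤ R := mul_log_div_le_sub hM hS
  have hsplit : log (S / R) + log (k - 1) ≤ log (k * S / R) := by
    have hk1 : 0 < k - 1 := by linarith
    rw [← log_mul (by positivity) hk1.ne']
    apply log_le_log (mul_pos (div_pos hS hR) hk1)
    rw [div_mul_eq_mul_div]
    exact div_le_div_of_nonneg_right (by nlinarith) hR.le
  have hone : 1 ≤ log (k * S / R) := by
    rw [le_log_iff_exp_le (by positivity), le_div_iff₀ hR]
    nlinarith [exp_one_lt_three]
  calc M * log (S / M) + R * log (S / R) + R * log (k - 1)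
      = M * log (S / M) + R * (log (S / R) + log (k - 1)) := by ring
    _ ≤ R * log (k * S / R) + R * log (k * S / R) :=
        add_le_add (hentropy.trans (le_mul_of_one_le_right hR.le hone))
          (mul_le_mul_of_nonneg_left hsplit hR.le)
    _ = 2 * R * log (k * S / R) := by ring

theorem stmt14_general {k : ℕ} [NeZero k] (hk : 2 ≤ k) (v : Fin k → ℝ) (hv : ∀ i, 0 ≤ v i)
    (hM : (∑ i, v i) / 2 ≤ linf v) :
    IEnt v ≤
      linf v * Real.logb 2 ((∑ i, v i) / linf v) +
        ((∑ i, v i) - linf v) * Real.logb 2 ((∑ i, v i) / ((∑ i, v i) - linf v)) +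
        ((∑ i, v i) - linf v) * Real.logb 2 ((k : ℝ) - 1) ∧
    linf v * Real.logb 2 ((∑ i, v i) / linf v) +
        ((∑ i, v i) - linf v) * Real.logb 2 ((∑ i, v i) / ((∑ i, v i) - linf v)) +
        ((∑ i, v i) - linf v) * Real.logb 2 ((k : ℝ) - 1) ≤
      2 * ((∑ i, v i) - linf v) *
        Real.logb 2 ((k : ℝ) * (∑ i, v i) / ((∑ i, v i) - linf v)) := by
  obtain ⟨i₀, -, hi₀⟩ := exists_mem_eq_sup' univ_nonempty v
  have hmax : linf v = v i₀ := hi₀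
  have hle : linf v ≤ ∑ i, v i := hmax ▸ single_le_sum (fun i _ => hv i) (mem_univ i₀)
  have hlog2 : 0 ≤ log 2 := log_nonneg one_le_two
  simp only [IEnt, logb, mul_div_assoc', ← sum_div, ← add_div]
  refine ⟨div_le_div_of_nonneg_right ?_ hlog2, div_le_div_of_nonneg_right ?_ hlog2⟩
  · simpa [hmax] using sum_mul_log_div_le_split_off hv i₀
  · exact split_entropy_le_two_mul_log hle (by linarith) (by exact_mod_cast hk)

/-- For `v ∈ ℝ₊^k` with `‖v‖₁ > 0` and `‖v‖_∞ ≥ ‖v‖₁/2`: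
`I_Ent(v) ≤ ‖v‖_∞·log(‖v‖₁/‖v‖_∞) + (‖v‖₁−‖v‖_∞)·log(‖v‖₁/(‖v‖₁−‖v‖_∞))
  + (‖v‖₁−‖v‖_∞)·log(k−1) ≤ 2(‖v‖₁−‖v‖_∞)·log(k‖v‖₁/(‖v‖₁−‖v‖_∞))`
(the right-hand sides are `0` when `‖v‖₁ = ‖v‖_∞`, by Lean's conventions). -/
theorem stmt14 {k : ℕ} [NeZero k] (hk : 2 ≤ k) (v : Fin k → ℝ) (hv : ∀ i, 0 ≤ v i)
    (hS : 0 < ∑ i, v i) (hM : (∑ i, v i) / 2 ≤ linf v) :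
    IEnt v ≤
      linf v * Real.logb 2 ((∑ i, v i) / linf v) +
        ((∑ i, v i) - linf v) * Real.logb 2 ((∑ i, v i) / ((∑ i, v i) - linf v)) +
        ((∑ i, v i) - linf v) * Real.logb 2 ((k : ℝ) - 1) ∧
    linf v * Real.logb 2 ((∑ i, v i) / linf v) +
        ((∑ i, v i) - linf v) * Real.logb 2 ((∑ i, v i) / ((∑ i, v i) - linf v)) +
        ((∑ i, v i) - linf v) * Real.logb 2 ((k : ℝ) - 1) ≤
      2 * ((∑ i, v i) - linf v) *
        Real.logb 2 ((k : ℝ) * (∑ i, v i) / ((∑ i, v i) - linf v)) :=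
  stmt14_general hk v hv hM
end

section
/- Two-dimensional entropy impurity bound: for a nonzero vector u ∈ ℝ₊², if α = min{u₁, u₂} then α·log(‖u‖₁/α) ≤ I_Ent(u) ≤ 2α·log(‖u‖₁/α), provided α > 0. -/
/-!
Say `a ≤ b`. The smaller term `b log((a+b)/b)` is nonnegative, which gives the lower bound, and it is
at most the larger term `a log((a+b)/a)`, which gives the upper bound. For the comparison write
`log((a+b)/a) = log((a+b)/b) + log(b/a)`; then `log(1 + a/b) ≤ a/b` and `log(b/a) ≥ 1 - a/b`
bound both sides of `(b - a) log((a+b)/b) ≤ a log(b/a)` by the same quantity `a (b - a)/b`.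
-/

open Real

lemma mul_log_add_div_le_mul_log_add_div {a b : ℝ} (ha : 0 < a) (hab : a ≤ b) :
    b * log ((a + b) / b) ≤ a * log ((a + b) / a) := by
  have hb : 0 < b := ha.trans_le hab
  have hsplit : log ((a + b) / a) = log ((a + b) / b) + log (b / a) := by
    rw [← log_mul (by positivity) (by positivity)]
    congr 1
    field_simp
  have hlog_le : log ((a + b) / b) ≤ a / b :=
    calc log ((a + b) / b) ≤ (a + b) / b - 1 := log_le_sub_one_of_pos (by positivity)
      _ = a / b := by rw [add_div, div_self hb.ne']; ring
  have hle_log : 1 - a / b ≤ log (b / a) := by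
    simpa only [inv_div] using one_sub_inv_le_log_of_pos (show 0 < b / a by positivity)
  calc b * log ((a + b) / b)
      = a * log ((a + b) / b) + (b - a) * log ((a + b) / b) := by ring
    _ ≤ a * log ((a + b) / b) + (b - a) * (a / b) := by gcongr
    _ = a * log ((a + b) / b) + a * (1 - a / b) := by field_simp
    _ ≤ a * log ((a + b) / b) + a * log (b / a) := by gcongr
    _ = a * log ((a + b) / a) := by rw [hsplit]; ring

lemma mul_logb_add_div_le_mul_logb_add_div {c a b : ℝ} (hc : 1 ≤ c) (ha : 0 < a) (hab : a ≤ b) :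
    b * logb c ((a + b) / b) ≤ a * logb c ((a + b) / a) := by
  simp only [logb, ← mul_div_assoc]
  exact div_le_div_of_nonneg_right (mul_log_add_div_le_mul_log_add_div ha hab) (log_nonneg hc)

lemma logb_entropy_bounds_of_le {c a b : ℝ} (hc : 1 < c) (ha : 0 < a) (hab : a ≤ b) :
    a * logb c ((a + b) / a) ≤ a * logb c ((a + b) / a) + b * logb c ((a + b) / b) ∧
    a * logb c ((a + b) / a) + b * logb c ((a + b) / b) ≤ 2 * a * logb c ((a + b) / a) := by
  have hb : 0 < b := ha.trans_le hab
  have hnonneg : 0 ≤ b * logb c ((a + b) / b) :=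
    mul_nonneg hb.le (logb_nonneg hc ((one_le_div hb).mpr (by linarith)))
  have hle := mul_logb_add_div_le_mul_logb_add_div hc.le ha hab
  constructor <;> linarith

theorem stmt15_general (u1 u2 : ℝ) (hα : 0 < min u1 u2) :
    min u1 u2 * Real.logb 2 ((u1 + u2) / min u1 u2) ≤
        u1 * Real.logb 2 ((u1 + u2) / u1) + u2 * Real.logb 2 ((u1 + u2) / u2) ∧
    u1 * Real.logb 2 ((u1 + u2) / u1) + u2 * Real.logb 2 ((u1 + u2) / u2) ≤
        2 * (min u1 u2) * Real.logb 2 ((u1 + u2) / min u1 u2) := by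
  rcases le_total u1 u2 with h | h
  · rw [min_eq_left h] at hα ⊢
    exact logb_entropy_bounds_of_le one_lt_two hα h
  · rw [min_eq_right h] at hα ⊢
    obtain ⟨hlower, hupper⟩ := logb_entropy_bounds_of_le one_lt_two hα h
    rw [add_comm u2 u1] at hlower hupper
    constructor <;> linarith

/-- Two-dimensional entropy impurity bound: for `u ∈ ℝ₊²` with `α = min{u₁,u₂} > 0`,
`α·log(‖u‖₁/α) ≤ I_Ent(u) ≤ 2α·log(‖u‖₁/α)`. -/
theorem stmt15 (u1 u2 : ℝ) (h1 : 0 ≤ u1) (h2 : 0 ≤ u2) (hα : 0 < min u1 u2) :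
    min u1 u2 * Real.logb 2 ((u1 + u2) / min u1 u2) ≤
        u1 * Real.logb 2 ((u1 + u2) / u1) + u2 * Real.logb 2 ((u1 + u2) / u2) ∧
    u1 * Real.logb 2 ((u1 + u2) / u1) + u2 * Real.logb 2 ((u1 + u2) / u2) ≤
        2 * (min u1 u2) * Real.logb 2 ((u1 + u2) / min u1 u2) :=
  stmt15_general u1 u2 hα
end

section
/- Let u₁ ≥ u₂ ≥ ⋯ ≥ u_L > 0 and X₁, …, X_L ≥ 0 be reals such that for every s < L with X_s ≠ 0 we have u_L + X_L ≥ u_s. Then ((u_L + X_L) + Σ_{m=1}^{L−1} X_m) · Π_{m=1}^{L−1} u_m ≤ (u_L + X_L) · Π_{m=1}^{L−1} (u_m + X_m). -/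
open Finset

theorem add_sum_mul_prod_le_mul_prod_add {ι R : Type*} [CommRing R] [LinearOrder R]
    [IsStrictOrderedRing R] (A : R) (S : Finset ι) (u X : ι → R)
    (hu : ∀ m ∈ S, 0 ≤ u m) (hX : ∀ m ∈ S, 0 ≤ X m) (hle : ∀ m ∈ S, X m ≠ 0 → u m ≤ A) :
    (A + ∑ m ∈ S, X m) * ∏ m ∈ S, u m ≤ A * ∏ m ∈ S, (u m + X m) := by
  induction S using Finset.cons_induction with
  | empty => simp
  | cons a S ha ih =>
    simp only [forall_mem_cons] at hu hX hle
    have hprod_nonneg : 0 ≤ ∏ m ∈ S, u m := prod_nonneg hu.2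
    have hprod_le : ∏ m ∈ S, u m ≤ ∏ m ∈ S, (u m + X m) :=
      prod_le_prod hu.2 fun m hm => le_add_of_nonneg_right (hX.2 m hm)
    have hnew : X a * (u a * ∏ m ∈ S, u m) ≤ X a * (A * ∏ m ∈ S, (u m + X m)) := by
      rcases eq_or_ne (X a) 0 with h | h
      · simp [h]
      · have hua := hle.1 h
        exact mul_le_mul_of_nonneg_left
          (mul_le_mul hua hprod_le hprod_nonneg (hu.1.trans hua)) hX.1
    rw [sum_cons, prod_cons, prod_cons]
    calc (A + (X a + ∑ m ∈ S, X m)) * (u a * ∏ m ∈ S, u m)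
        = u a * ((A + ∑ m ∈ S, X m) * ∏ m ∈ S, u m) + X a * (u a * ∏ m ∈ S, u m) := by ring
      _ ≤ u a * (A * ∏ m ∈ S, (u m + X m)) + X a * (A * ∏ m ∈ S, (u m + X m)) :=
        add_le_add (mul_le_mul_of_nonneg_left (ih hu.2 hX.2 hle.2) hu.1) hnew
      _ = A * ((u a + X a) * ∏ m ∈ S, (u m + X m)) := by ring

theorem stmt16_general (L : ℕ) (u X : ℕ → ℝ)
    (hpos : ∀ m ∈ Finset.Icc 1 L, 0 < u m)
    (hX : ∀ m ∈ Finset.Icc 1 L, 0 ≤ X m)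
    (hkey : ∀ s ∈ Finset.Icc 1 (L - 1), X s ≠ 0 → u s ≤ u L + X L) :
    ((u L + X L) + ∑ m ∈ Finset.Icc 1 (L - 1), X m) * ∏ m ∈ Finset.Icc 1 (L - 1), u m ≤
      (u L + X L) * ∏ m ∈ Finset.Icc 1 (L - 1), (u m + X m) := by
  have hsub : Icc 1 (L - 1) ⊆ Icc 1 L := Icc_subset_Icc_right (Nat.sub_le L 1)
  exact add_sum_mul_prod_le_mul_prod_add _ _ u X (fun m hm => (hpos m (hsub hm)).le)
    (fun m hm => hX m (hsub hm)) hkey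

/-- Product inequality: for `u₁ ≥ ⋯ ≥ u_L > 0` and `X₁, …, X_L ≥ 0` such that
`u_L + X_L ≥ u_s` whenever `s < L` and `X_s ≠ 0`, we have
`((u_L + X_L) + Σ_{m<L} X_m)·Π_{m<L} u_m ≤ (u_L + X_L)·Π_{m<L} (u_m + X_m)`. -/
theorem stmt16 (L : ℕ) (hL : 1 ≤ L) (u X : ℕ → ℝ)
    (hpos : ∀ m ∈ Finset.Icc 1 L, 0 < u m)
    (hdec : ∀ m ∈ Finset.Icc 1 (L - 1), u (m + 1) ≤ u m)
    (hX : ∀ m ∈ Finset.Icc 1 L, 0 ≤ X m)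
    (hkey : ∀ s ∈ Finset.Icc 1 (L - 1), X s ≠ 0 → u s ≤ u L + X L) :
    ((u L + X L) + ∑ m ∈ Finset.Icc 1 (L - 1), X m) * ∏ m ∈ Finset.Icc 1 (L - 1), u m ≤
      (u L + X L) * ∏ m ∈ Finset.Icc 1 (L - 1), (u m + X m) :=
  stmt16_general L u X hpos hX hkey
end

section
/- Comparing impurity to 2-dimensional projection (lower direction): let v ∈ ℝ₊^k be nonzero and u ∈ ℝ₊² be nonzero with ‖u‖₁ = ‖v‖₁ and min{u₁,u₂} ≤ ‖v‖₁ − ‖v‖_∞. If moreover ‖v‖₁ − ‖v‖_∞ ≤ ‖v‖₁/e, then I_Ent(u) ≤ 2·I_Ent(v). -/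
/-!
Write `f_S(x) = x log(S/x)` (natural log), so that `I_Ent(w) = Σ f_S(wᵢ) / log 2` for
`S = ‖w‖₁`. Let `S = ‖v‖₁ = ‖u‖₁`, `α = min{u₁,u₂}` and `β = ‖v‖₁ − ‖v‖_∞`. Since
`log y ≤ y − 1`, the larger coordinate of `u` contributes at most `S − (S − α) = α`, which is
at most `f_S(α)` because `α ≤ S/e`; so `I(u) ≤ 2 f_S(α)`. Next `f_S` increases on `[0, S/e]`,
so `f_S(α) ≤ f_S(β)`. Finally `f_S` is subadditive, so `f_S(β)` is at most the contribution
of all coordinates of `v` but the largest.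
-/

open Real Finset

noncomputable def entropyTerm (S x : ℝ) : ℝ := x * log (S / x)

section entropyTerm

variable {S x a b : ℝ}

@[simp] lemma entropyTerm_zero_right (S : ℝ) : entropyTerm S 0 = 0 := by simp [entropyTerm]

lemma entropyTerm_nonneg (hx : 0 ≤ x) (hxS : x ≤ S) : 0 ≤ entropyTerm S x := by
  rcases hx.eq_or_lt with rfl | hx
  · simp
  exact mul_nonneg hx.le (log_nonneg ((one_le_div hx).2 hxS))

lemma entropyTerm_le_sub (hx : 0 ≤ x) (hxS : x ≤ S) : entropyTerm S x ≤ S - x := by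
  rcases hx.eq_or_lt with rfl | hx
  · simpa using hxS
  have hS : 0 < S := hx.trans_le hxS
  calc x * log (S / x) ≤ x * (S / x - 1) :=
        mul_le_mul_of_nonneg_left (log_le_sub_one_of_pos (by positivity)) hx.le
    _ = S - x := by field_simp

lemma one_le_log_div_of_le_div_exp (hx : 0 < x) (hxS : x ≤ S / exp 1) : 1 ≤ log (S / x) := by
  rw [le_div_iff₀ (exp_pos 1), mul_comm] at hxS
  have hS : 0 < S := (mul_pos (exp_pos 1) hx).trans_le hxS
  rw [le_log_iff_exp_le (by positivity), le_div_iff₀ hx]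
  exact hxS

lemma le_entropyTerm (hx : 0 ≤ x) (hxS : x ≤ S / exp 1) : x ≤ entropyTerm S x := by
  rcases hx.eq_or_lt with rfl | hx
  · simp
  have h := mul_le_mul_of_nonneg_left (one_le_log_div_of_le_div_exp hx hxS) hx.le
  rwa [mul_one] at h

lemma entropyTerm_le_entropyTerm (ha : 0 ≤ a) (hab : a ≤ b) (hb : b ≤ S / exp 1) :
    entropyTerm S a ≤ entropyTerm S b := by
  rcases ha.eq_or_lt with rfl | ha
  · have hS : 0 ≤ S := by
      have := hab.trans hb
      rwa [le_div_iff₀ (exp_pos 1), zero_mul] at this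
    simpa using entropyTerm_nonneg hab (hb.trans (div_le_self hS (one_le_exp zero_le_one)))
  have hb0 : 0 < b := ha.trans_le hab
  have hS : 0 < S := by
    have := hb0.trans_le hb
    rwa [lt_div_iff₀ (exp_pos 1), zero_mul] at this
  have hlog : 1 ≤ log (S / b) := one_le_log_div_of_le_div_exp hb0 hb
  have hsplit : entropyTerm S a = a * log (S / b) + entropyTerm b a := by
    rw [entropyTerm, entropyTerm, ← mul_add, ← log_mul (by positivity) (by positivity)]
    field_simp
  have hba : entropyTerm b a ≤ b - a := entropyTerm_le_sub ha.le hab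
  calc entropyTerm S a ≤ a * log (S / b) + (b - a) * log (S / b) := by
        nlinarith [mul_le_mul_of_nonneg_left hlog (sub_nonneg.2 hab)]
    _ = entropyTerm S b := by rw [entropyTerm]; ring

lemma entropyTerm_add_le (hS : 0 < S) (ha : 0 ≤ a) (hb : 0 ≤ b) :
    entropyTerm S (a + b) ≤ entropyTerm S a + entropyTerm S b := by
  rcases ha.eq_or_lt with rfl | ha
  · simp
  rcases hb.eq_or_lt with rfl | hb
  · simp
  have hlog_le {c : ℝ} (hc : 0 < c) (hcab : c ≤ a + b) : log (S / (a + b)) ≤ log (S / c) :=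
    log_le_log (by positivity) (div_le_div_of_nonneg_left hS.le hc hcab)
  calc entropyTerm S (a + b) = a * log (S / (a + b)) + b * log (S / (a + b)) := add_mul _ _ _
    _ ≤ a * log (S / a) + b * log (S / b) :=
      add_le_add (mul_le_mul_of_nonneg_left (hlog_le ha (by linarith)) ha.le)
        (mul_le_mul_of_nonneg_left (hlog_le hb (by linarith)) hb.le)

lemma entropyTerm_sum_le {ι : Type*} (hS : 0 < S) {s : Finset ι} {w : ι → ℝ}
    (hw : ∀ i ∈ s, 0 ≤ w i) : entropyTerm S (∑ i ∈ s, w i) ≤ ∑ i ∈ s, entropyTerm S (w i) :=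
  le_sum_of_subadditive_on_pred (entropyTerm S) (0 ≤ ·) (entropyTerm_zero_right S).le
    (fun _ _ => entropyTerm_add_le hS) (fun _ _ => add_nonneg) w hw

lemma entropyTerm_add_entropyTerm_le (ha : 0 ≤ a) (hb : 0 ≤ b)
    (hmin : min a b ≤ (a + b) / exp 1) :
    entropyTerm (a + b) a + entropyTerm (a + b) b ≤ 2 * entropyTerm (a + b) (min a b) := by
  wlog hab : a ≤ b generalizing a b
  · have h := this hb ha (by rwa [min_comm, add_comm]) (le_of_not_ge hab)
    rw [add_comm b a, min_comm] at h
    linarith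
  rw [min_eq_left hab] at hmin ⊢
  have hlarge : entropyTerm (a + b) b ≤ a := by
    linarith [entropyTerm_le_sub hb (le_add_of_nonneg_left ha)]
  linarith [le_entropyTerm ha hmin]

end entropyTerm

lemma entropyTerm_sum_sub_linf_le {k : ℕ} [NeZero k] {v : Fin k → ℝ} (hv : ∀ i, 0 ≤ v i)
    (hS : 0 < ∑ i, v i) :
    entropyTerm (∑ i, v i) (∑ i, v i - linf v) ≤ ∑ i, entropyTerm (∑ j, v j) (v i) := by
  obtain ⟨i₀, -, hi₀⟩ := exists_mem_eq_sup' univ_nonempty v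
  have hrest : ∑ i, v i - linf v = ∑ i ∈ univ.erase i₀, v i := by
    rw [sum_erase_eq_sub (mem_univ i₀), linf, hi₀]
  rw [hrest]
  exact (entropyTerm_sum_le hS fun i _ => hv i).trans <|
    sum_le_sum_of_subset_of_nonneg (erase_subset _ _) fun i _ _ =>
      entropyTerm_nonneg (hv i) (single_le_sum (fun j _ => hv j) (mem_univ i))

lemma IEnt_eq_sum_entropyTerm_div_log_two {m : ℕ} (w : Fin m → ℝ) :
    IEnt w = (∑ i, entropyTerm (∑ j, w j) (w i)) / log 2 := by
  simp only [IEnt, entropyTerm, logb, sum_div, mul_div_assoc]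

theorem stmt19_general {k : ℕ} [NeZero k] (v : Fin k → ℝ) (hv : ∀ i, 0 ≤ v i)
    (u1 u2 : ℝ) (hu1 : 0 ≤ u1) (hu2 : 0 ≤ u2) (hu0 : 0 < u1 + u2)
    (hsum : u1 + u2 = ∑ i, v i)
    (hmin : min u1 u2 ≤ (∑ i, v i) - linf v)
    (hcase : (∑ i, v i) - linf v ≤ (∑ i, v i) / Real.exp 1) :
    u1 * Real.logb 2 ((u1 + u2) / u1) + u2 * Real.logb 2 ((u1 + u2) / u2) ≤
      2 * IEnt v := by
  have hS : 0 < ∑ i, v i := hsum ▸ hu0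
  have key : entropyTerm (u1 + u2) u1 + entropyTerm (u1 + u2) u2 ≤
      2 * ∑ i, entropyTerm (∑ j, v j) (v i) := by
    calc entropyTerm (u1 + u2) u1 + entropyTerm (u1 + u2) u2
        ≤ 2 * entropyTerm (u1 + u2) (min u1 u2) :=
          entropyTerm_add_entropyTerm_le hu1 hu2 (hsum ▸ hmin.trans hcase)
      _ ≤ 2 * entropyTerm (∑ i, v i) (∑ i, v i - linf v) := by
          rw [hsum]
          gcongr 2 * ?_
          exact entropyTerm_le_entropyTerm (le_min hu1 hu2) hmin hcase
      _ ≤ 2 * ∑ i, entropyTerm (∑ j, v j) (v i) := by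
          gcongr 2 * ?_
          exact entropyTerm_sum_sub_linf_le hv hS
  have hlhs : u1 * logb 2 ((u1 + u2) / u1) + u2 * logb 2 ((u1 + u2) / u2) =
      (entropyTerm (u1 + u2) u1 + entropyTerm (u1 + u2) u2) / log 2 := by
    simp only [entropyTerm, logb, add_div, mul_div_assoc]
  rw [hlhs, IEnt_eq_sum_entropyTerm_div_log_two, ← mul_div_assoc]
  exact div_le_div_of_nonneg_right key (log_pos one_lt_two).le

/-- Projection comparison (Case 1): if `v ∈ ℝ₊^k` is nonzero, `u ∈ ℝ₊²` is nonzero with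
`‖u‖₁ = ‖v‖₁` and `min{u₁,u₂} ≤ ‖v‖₁ − ‖v‖_∞`, and `‖v‖₁ − ‖v‖_∞ ≤ ‖v‖₁/e`, then
`I_Ent(u) ≤ 2·I_Ent(v)`. -/
theorem stmt19 {k : ℕ} [NeZero k] (v : Fin k → ℝ) (hv : ∀ i, 0 ≤ v i) (hv0 : v ≠ 0)
    (u1 u2 : ℝ) (hu1 : 0 ≤ u1) (hu2 : 0 ≤ u2) (hu0 : 0 < u1 + u2)
    (hsum : u1 + u2 = ∑ i, v i)
    (hmin : min u1 u2 ≤ (∑ i, v i) - linf v)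
    (hcase : (∑ i, v i) - linf v ≤ (∑ i, v i) / Real.exp 1) :
    u1 * Real.logb 2 ((u1 + u2) / u1) + u2 * Real.logb 2 ((u1 + u2) / u2) ≤
      2 * IEnt v :=
  stmt19_general v hv u1 u2 hu1 hu2 hu0 hsum hmin hcase
end
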